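/- arXiv:1611.05956 — 4 statements merged into one kernel-verified Lean document; each statement's English description precedes it below -/
import Mathlib

section
/- Let G be a group with involutive automorphism τ, Z its center, z ∈ Z, and g ∈ G with w := g·τ(g) ∈ Z. Set τ' = int(g) ∘ τ (an involutive automorphism). Then the map h ↦ h·g⁻¹ induces a well-defined bijection from H¹(τ,G;{z}) to H¹(τ',G;{z·w⁻¹}); i.e. h·τ(h) = z implies (h·g⁻¹)·τ'(h·g⁻¹) = z·w⁻¹, equivalent cocycles map to equivalent cocycles, and the map is bijective on cohomology classes. -/
/-- Twisting. Let `z, w ∈ Z(G)`, `g * τ g = w`, `τ' = int(g) ∘ τ`. The map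
`h ↦ h * g⁻¹` sends cocycles of `H¹(τ,G;{z})` to cocycles of `H¹(τ',G;{z·w⁻¹})`, sends
equivalent cocycles to equivalent cocycles, and is injective and surjective on classes. -/
theorem stmt_3 {G : Type*} [Group G] (τ : G →* G) (hτ : ∀ g, τ (τ g) = g)
    (z w g : G) (hz : z ∈ Set.center G) (hw : w ∈ Set.center G) (hgw : g * τ g = w)
    (τ' : G → G) (hτ' : ∀ x, τ' x = g * τ x * g⁻¹) :
    (∀ h : G, h * τ h = z → (h * g⁻¹) * τ' (h * g⁻¹) = z * w⁻¹) ∧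
    (∀ h h' : G, (∃ t : G, h' = t * h * (τ t)⁻¹) →
      ∃ t : G, h' * g⁻¹ = t * (h * g⁻¹) * (τ' t)⁻¹) ∧
    (∀ h h' : G, h * τ h = z → h' * τ h' = z →
      (∃ t : G, h' * g⁻¹ = t * (h * g⁻¹) * (τ' t)⁻¹) → ∃ t : G, h' = t * h * (τ t)⁻¹) ∧
    (∀ k : G, k * τ' k = z * w⁻¹ → ∃ h : G, h * τ h = z ∧ h * g⁻¹ = k) := by
  refine ⟨?_, ?_, ?_, ?_⟩
  · intro h hh
    rw [hτ', map_mul, map_inv, ← hgw, mul_inv_rev, ← hh]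
    group
  · rintro h h' ⟨t, rfl⟩
    refine ⟨t, ?_⟩
    rw [hτ']
    group
  · rintro h h' _ _ ⟨t, ht⟩
    refine ⟨t, ?_⟩
    have h1 : h' = (t * (h * g⁻¹) * (τ' t)⁻¹) * g := by rw [← ht]; group
    rw [h1, hτ']
    group
  · intro k hk
    refine ⟨k * g, ?_, by group⟩
    have hk' : k * (g * τ k * g⁻¹) = z * w⁻¹ := by rw [← hτ']; exact hk
    calc k * g * τ (k * g) = (k * (g * τ k * g⁻¹)) * (g * τ g) := by rw [map_mul]; group
      _ = z * w⁻¹ * w := by rw [hk', hgw]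
      _ = z := by group
end

section
/- Let G be a real Lie group with Cartan decomposition (K,𝔭), meaning K is a compact subgroup, 𝔭 ⊆ Lie(G) is Ad(K)-stable, and (k,X) ↦ k·exp(X) is a diffeomorphism K × 𝔭 → G. Then K is a maximal compact subgroup of G. -/
/-!
If `L ⊇ K` is a compact subgroup and `g = k · exp X ∈ L`, then `exp X = k⁻¹ g ∈ L`, so all powers
`exp (n • X) = (exp X)ⁿ` lie in `L`. Transporting `L` through the homeomorphism `G ≃ K × 𝔭` and
projecting to `𝔭` gives a compact, hence bounded, set containing every `n • X`; thus `X = 0` and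
`g = k ∈ K`.
-/

open Bornology

lemma eq_zero_of_isBounded_range_natCast_smul {E : Type*} [NormedAddCommGroup E]
    [NormedSpace ℝ E] {x : E} (h : IsBounded (Set.range fun n : ℕ => (n : ℝ) • x)) : x = 0 := by
  by_contra hx
  obtain ⟨C, hC⟩ := isBounded_iff_forall_norm_le.mp h
  have hpos : 0 < ‖x‖ := norm_pos_iff.mpr hx
  obtain ⟨n, hn⟩ := exists_nat_gt (C / ‖x‖)
  have hle : (n : ℝ) * ‖x‖ ≤ C := by
    simpa [norm_smul] using hC _ (Set.mem_range_self n)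
  exact absurd ((div_lt_iff₀ hpos).mp hn) (not_lt.mpr hle)

section CartanDecomposition

variable {E G : Type*} [NormedAddCommGroup E] [NormedSpace ℝ E]
  [Group G] [TopologicalSpace G] {𝔭 : Submodule ℝ E} {expm : E → G} {K : Subgroup G}
  {Φ : (K × 𝔭) ≃ₜ G}

lemma symm_apply_expm (hΦ : ∀ (k : K) (X : 𝔭), Φ (k, X) = (k : G) * expm (X : E)) (X : 𝔭) :
    Φ.symm (expm X) = (1, X) :=
  Φ.symm_apply_eq.mpr (by rw [hΦ, OneMemClass.coe_one, one_mul])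

lemma eq_zero_of_expm_mem_of_isCompact
    (hpow : ∀ (X : E) (n : ℕ), expm ((n : ℝ) • X) = expm X ^ n)
    (hΦ : ∀ (k : K) (X : 𝔭), Φ (k, X) = (k : G) * expm (X : E))
    {L : Subgroup G} (hL : IsCompact (L : Set G)) {X : 𝔭} (hX : expm (X : E) ∈ L) :
    (X : E) = 0 := by
  have hproj : IsCompact ((fun p : K × 𝔭 => (p.2 : E)) '' (Φ.symm '' L)) :=
    (hL.image Φ.symm.continuous).image (continuous_subtype_val.comp continuous_snd)
  refine eq_zero_of_isBounded_range_natCast_smul (hproj.isBounded.subset ?_)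
  rintro _ ⟨n, rfl⟩
  refine ⟨(1, (n : ℝ) • X), ⟨expm ((n : ℝ) • (X : E)), ?_, ?_⟩, rfl⟩
  · rw [hpow]
    exact pow_mem hX n
  · exact symm_apply_expm hΦ ((n : ℝ) • X)

end CartanDecomposition

theorem stmt_4_general {E : Type*} [NormedAddCommGroup E] [NormedSpace ℝ E]
    {G : Type*} [Group G] [TopologicalSpace G]
    (𝔭 : Submodule ℝ E) (expm : E → G)
    (hpow : ∀ (X : E) (n : ℕ), expm ((n : ℝ) • X) = expm X ^ n)
    (K : Subgroup G)
    (Φ : (K × 𝔭) ≃ₜ G) (hΦ : ∀ (k : K) (X : 𝔭), Φ (k, X) = (k : G) * expm (X : E)) :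
    ∀ L : Subgroup G, IsCompact (L : Set G) → K ≤ L → L = K := by
  intro L hL hKL
  refine le_antisymm (fun g hg => ?_) hKL
  obtain ⟨⟨k, X⟩, rfl⟩ : ∃ p, Φ p = g := Φ.surjective g
  rw [hΦ] at hg ⊢
  have hexpL : expm (X : E) ∈ L := by
    simpa using L.mul_mem (L.inv_mem (hKL k.2)) hg
  have hexp_zero : expm 0 = 1 := by simpa using hpow 0 0
  rw [eq_zero_of_expm_mem_of_isCompact hpow hΦ hL hexpL, hexp_zero, mul_one]
  exact k.2

/-- If a (Lie) topological group `G` admits a Cartan decomposition `(K,𝔭)`: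
`K` a compact subgroup, `𝔭 ⊆ Lie(G)` an `Ad(K)`-stable subspace, and `(k,X) ↦ k·exp X` a
homeomorphism `K × 𝔭 ≃ G` (with `exp` continuous and `exp(nX) = (exp X)ⁿ`), then `K` is a
maximal compact subgroup of `G`. -/
theorem stmt_4 {E : Type*} [NormedAddCommGroup E] [NormedSpace ℝ E]
    {G : Type*} [Group G] [TopologicalSpace G] [IsTopologicalGroup G]
    (𝔭 : Submodule ℝ E) (expm : E → G) (hexpcont : Continuous expm)
    (hpow : ∀ (X : E) (n : ℕ), expm ((n : ℝ) • X) = expm X ^ n)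
    (K : Subgroup G) (hKcpt : IsCompact (K : Set G))
    (hAd : ∀ k ∈ K, ∀ X ∈ 𝔭, ∃ Y ∈ 𝔭, k * expm X * k⁻¹ = expm Y)
    (Φ : (K × 𝔭) ≃ₜ G) (hΦ : ∀ (k : K) (X : 𝔭), Φ (k, X) = (k : G) * expm (X : E)) :
    ∀ L : Subgroup G, IsCompact (L : Set G) → K ≤ L → L = K :=
  stmt_4_general 𝔭 expm hpow K Φ hΦ
end

section
/- Let G be a group acting transitively on a set X, let τ_G be an involutive automorphism of G and τ_X an involutive map of X compatible with the action: τ_X(g·x) = τ_G(g)·τ_X(x). Suppose x ∈ X is fixed by τ_X, and let Gˣ be the stabilizer of x. Then the map sending the orbit of g·x ∈ X^{τ_X} under G^{τ_G} to the class of g⁻¹·τ_G(g) is a well-defined bijection from X^{τ_X}/G^{τ_G} onto the kernel of the natural map H¹(τ_G, Gˣ) → H¹(τ_G, G) of pointed sets. -/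
/-- For a transitive `G`-set `X` with compatible involutions `τ_G, τ_X` and a
fixed point `x ∈ X^{τ_X}` with stabilizer `Gˣ`, the map `g·x ↦ cl(g⁻¹·τ_G(g))` is a
well-defined bijection from `X^{τ_X}/G^{τ_G}` onto `ker(H¹(τ_G,Gˣ) → H¹(τ_G,G))`:
(i) the cocycle lands in the kernel, (ii) two fixed points are in the same `G^{τ_G}`-orbit
iff their cocycles are equivalent in `Gˣ`, (iii) every kernel class is hit. -/
theorem stmt_7 {G X : Type*} [Group G] [MulAction G X]
    (htrans : ∀ x y : X, ∃ g : G, g • x = y)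
    (τG : G →* G) (hτG : ∀ g, τG (τG g) = g)
    (τX : X → X) (hτX : ∀ x, τX (τX x) = x)
    (hcomp : ∀ (g : G) (x : X), τX (g • x) = τG g • τX x)
    (x : X) (hx : τX x = x) :
    (∀ g : G, τX (g • x) = g • x →
      (g⁻¹ * τG g) ∈ MulAction.stabilizer G x ∧
      (g⁻¹ * τG g) * τG (g⁻¹ * τG g) = 1 ∧
      ∃ t : G, g⁻¹ * τG g = t * (τG t)⁻¹) ∧
    (∀ g g' : G, τX (g • x) = g • x → τX (g' • x) = g' • x →
      ((∃ u : G, τG u = u ∧ u • (g • x) = g' • x) ↔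
        ∃ t ∈ MulAction.stabilizer G x, g'⁻¹ * τG g' = t * (g⁻¹ * τG g) * (τG t)⁻¹)) ∧
    (∀ c : G, c ∈ MulAction.stabilizer G x → c * τG c = 1 → (∃ t : G, c = t * (τG t)⁻¹) →
      ∃ g : G, τX (g • x) = g • x ∧
        ∃ t ∈ MulAction.stabilizer G x, g⁻¹ * τG g = t * c * (τG t)⁻¹) := by
  refine ⟨?_, ?_, ?_⟩
  · intro g hg
    have h1 : τG g • x = g • x := by rw [← hx, ← hcomp, hg, hx]
    refine ⟨?_, ?_, ⟨g⁻¹, ?_⟩⟩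
    · show (g⁻¹ * τG g) • x = x
      rw [mul_smul, h1, ← mul_smul, inv_mul_cancel, one_smul]
    · simp [mul_assoc, hτG]
    · simp [hτG]
  · intro g g' hg hg'
    have h1 : τG g • x = g • x := by rw [← hx, ← hcomp, hg, hx]
    have h1' : τG g' • x = g' • x := by rw [← hx, ← hcomp, hg', hx]
    constructor
    · rintro ⟨u, hu, huo⟩
      refine ⟨g'⁻¹ * u * g, ?_, ?_⟩
      · show (g'⁻¹ * u * g) • x = x
        rw [mul_smul, mul_smul, huo, ← mul_smul, inv_mul_cancel, one_smul]
      · simp only [map_mul, map_inv, hu]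
        group
    · rintro ⟨t, ht, heq⟩
      refine ⟨g' * t * g⁻¹, ?_, ?_⟩
      · have : τG g' = g' * (t * (g⁻¹ * τG g) * (τG t)⁻¹) := by
          rw [← heq]; group
        simp only [map_mul, map_inv, this]
        group
      · have : t • x = x := ht
        rw [mul_smul, mul_smul, ← mul_smul g⁻¹, inv_mul_cancel, one_smul, this]
  · intro c hc hcoc ⟨t, htc⟩
    refine ⟨t⁻¹, ?_, 1, ?_, ?_⟩
    · have hst : (t * (τG t)⁻¹) • x = x := htc ▸ hc
      have : τG t⁻¹ • x = t⁻¹ • x := by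
        rw [map_inv]
        have := congrArg (fun y => ((τG t)⁻¹ * t⁻¹) • y) hst
        simpa [mul_smul, ← mul_assoc] using this
      rw [hcomp, hx, this]
    · exact MulAction.mem_stabilizer_iff.mpr (one_smul G x)
    · simp [htc]
end

section
/- Let G be a group acting transitively on a set X with compatible involutions τ_G on G and τ_X on X (τ_X(g·x) = τ_G(g)·τ_X(x)). If x ∈ X^{τ_X} and the kernel of H¹(τ_G, Gˣ) → H¹(τ_G, G) is trivial, then the fixed-point set X^{τ_X} is a single orbit under G^{τ_G}. -/
/-- Same setting as the orbit lemma: if the kernel of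
`H¹(τ_G,Gˣ) → H¹(τ_G,G)` is trivial, then the fixed-point set `X^{τ_X}` is a single orbit
under `G^{τ_G}`. -/
theorem stmt_8 {G X : Type*} [Group G] [MulAction G X]
    (htrans : ∀ x y : X, ∃ g : G, g • x = y)
    (τG : G →* G) (hτG : ∀ g, τG (τG g) = g)
    (τX : X → X) (hτX : ∀ x, τX (τX x) = x)
    (hcomp : ∀ (g : G) (x : X), τX (g • x) = τG g • τX x)
    (x : X) (hx : τX x = x)
    (hker : ∀ c ∈ MulAction.stabilizer G x, c * τG c = 1 → (∃ t : G, c = t * (τG t)⁻¹) →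
      ∃ s ∈ MulAction.stabilizer G x, c = s * (τG s)⁻¹) :
    ∀ y y' : X, τX y = y → τX y' = y' → ∃ u : G, τG u = u ∧ u • y = y' := by
  have key : ∀ y : X, τX y = y → ∃ u : G, τG u = u ∧ u • x = y := by
    intro y hy
    obtain ⟨g, hg⟩ := htrans x y
    have hτgy : τG g • x = y := by
      have := hcomp g x
      rw [hg, hy, hx] at this
      exact this.symm
    have hcstab : g⁻¹ * τG g ∈ MulAction.stabilizer G x := by
      rw [MulAction.mem_stabilizer_iff, mul_smul, hτgy, ← hg, inv_smul_smul]
    have hcoc : (g⁻¹ * τG g) * τG (g⁻¹ * τG g) = 1 := by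
      simp [hτG, mul_assoc]
    obtain ⟨s, hs, hseq⟩ := hker (g⁻¹ * τG g) hcstab hcoc
      ⟨g⁻¹, by simp⟩
    refine ⟨g * s, ?_, ?_⟩
    · have : τG g * τG s = g * s := by
        have h1 : g * (g⁻¹ * τG g) = g * (s * (τG s)⁻¹) := by rw [hseq]
        rw [mul_inv_cancel_left] at h1
        rw [← mul_assoc] at h1
        calc τG g * τG s = g * s * (τG s)⁻¹ * τG s := by rw [← h1]
          _ = g * s := by group
      rw [map_mul]; exact this
    · rw [mul_smul, MulAction.mem_stabilizer_iff.mp hs, hg]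
  intro y y' hy hy'
  obtain ⟨u, hu, hux⟩ := key y hy
  obtain ⟨u', hu', hux'⟩ := key y' hy'
  refine ⟨u' * u⁻¹, ?_, ?_⟩
  · simp [hu, hu']
  · rw [mul_smul, ← hux, inv_smul_smul, hux']
end
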